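/- Let G be a group whose derived subgroup G' is generated by a finite set T of elements each of which has finite conjugacy class in G (equivalently, centralizer of finite index). Then the center of ⟨T⟩ has finite index in ⟨T⟩, and hence by Schur's theorem the derived subgroup ⟨T⟩' is finite; in particular G is finite-by-metabelian. -/

import Mathlib

/-!
The intersection `C` of the centralizers of the elements of `T` has finite index in `G`, since
`T` is finite and each `t ∈ T` has finitely many conjugates. An element of `⟨T⟩ ∩ C` commutes
with every generator of `⟨T⟩`, hence is central in `⟨T⟩`; so `Z(⟨T⟩)` has finite index in `⟨T⟩`.
A commutator `⁅a, b⁆` only depends on the cosets of `a` and `b` modulo the center, so `⟨T⟩` has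
finitely many commutators, and Schur's theorem makes `⟨T⟩' = G''` finite. Being a term of the
derived series, `G''` is normal in `G`.
-/

open scoped commutatorElement

namespace Subgroup

variable {G : Type*} [Group G]

theorem finiteIndex_centralizer_singleton_of_finite_conj {g : G}
    (h : (Set.range fun x : G => x⁻¹ * g * x).Finite) : (centralizer {g}).FiniteIndex := by
  have horbit : (MulAction.orbit (ConjAct G) g).Finite := by
    refine h.subset ?_
    rintro _ ⟨x, rfl⟩
    exact ⟨(ConjAct.ofConjAct x)⁻¹, by simp [ConjAct.smul_def, mul_assoc]⟩
  have hindex : (centralizer {g}).index = (MulAction.orbit (ConjAct G) g).ncard := by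
    rw [centralizer_eq_comap_stabilizer, ← MulAction.index_stabilizer]
    exact index_comap_of_surjective _ ConjAct.toConjAct.surjective
  exact ⟨hindex ▸ ((Set.ncard_pos horbit).mpr ⟨g, MulAction.mem_orbit_self g⟩).ne'⟩

theorem subgroupOf_centralizer_le_center (H : Subgroup G) :
    (centralizer (H : Set G)).subgroupOf H ≤ center H := by
  intro c hc
  rw [mem_subgroupOf, mem_centralizer_iff] at hc
  rw [mem_center_iff]
  intro h
  exact Subtype.ext (hc h h.2)

theorem finiteIndex_center_closure {S : Set G} (hS : S.Finite)
    (h : ∀ s ∈ S, (centralizer {s}).FiniteIndex) : (center (closure S)).FiniteIndex := by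
  have : Finite S := hS
  have : (centralizer (closure S : Set G)).FiniteIndex := by
    rw [centralizer_closure, centralizer_eq_iInf, iInf_subtype']
    exact finiteIndex_iInf fun s => h s s.2
  exact finiteIndex_of_le (subgroupOf_centralizer_le_center _)

theorem commutatorElement_mul_left_of_mem_center {z : G} (hz : z ∈ center G) (a b : G) :
    ⁅a * z, b⁆ = ⁅a, b⁆ := by
  have : ⁅z, b⁆ = 1 := commutatorElement_eq_one_iff_commute.mpr (mem_center_iff.mp hz b).symm
  rw [commutatorElement_mul_left_eq_conj_mul, this, mul_one, mul_inv_cancel, one_mul]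

theorem commutatorElement_mul_right_of_mem_center {z : G} (hz : z ∈ center G) (a b : G) :
    ⁅a, b * z⁆ = ⁅a, b⁆ := by
  have : ⁅a, z⁆ = 1 := commutatorElement_eq_one_iff_commute.mpr (mem_center_iff.mp hz a)
  rw [commutatorElement_mul_right_eq_mul_conj, this, mul_one, mul_inv_cancel_right]

theorem finite_commutatorSet_of_finiteIndex_center [(center G).FiniteIndex] :
    Finite (commutatorSet G) := by
  refine (Set.Finite.subset (Set.finite_range
    fun p : (G ⧸ center G) × (G ⧸ center G) => ⁅p.1.out, p.2.out⁆) ?_).to_subtype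
  rintro _ ⟨a, b, rfl⟩
  refine ⟨(a, b), ?_⟩
  obtain ⟨z, hz⟩ := QuotientGroup.mk_out_eq_mul (center G) a
  obtain ⟨w, hw⟩ := QuotientGroup.mk_out_eq_mul (center G) b
  simp only [hz, hw, commutatorElement_mul_left_of_mem_center z.2,
    commutatorElement_mul_right_of_mem_center w.2]

end Subgroup

open Subgroup in
/-- If the derived subgroup of `G` is generated by a finite set `T` of
elements each having finite conjugacy class in `G`, then the center of `⟨T⟩` has finite
index in `⟨T⟩`, the derived subgroup of `⟨T⟩` is finite, and `G` is finite-by-metabelian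
(there is a finite normal subgroup `N` with `G/N` metabelian, i.e. `G'' ≤ N`). -/
theorem stmt9 {G : Type*} [Group G] (T : Finset G)
    (hgen : Subgroup.closure (T : Set G) = commutator G)
    (hfc : ∀ t ∈ T, (Set.range fun x : G => x⁻¹ * t * x).Finite) :
    (Subgroup.center ↥(Subgroup.closure (T : Set G))).FiniteIndex ∧
      Finite ↥(commutator ↥(Subgroup.closure (T : Set G))) ∧
      ∃ N : Subgroup G, N.Normal ∧ Finite N ∧ derivedSeries G 2 ≤ N := by
  have hcenter : (center (closure (T : Set G))).FiniteIndex :=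
    finiteIndex_center_closure T.finite_toSet
      fun t ht => finiteIndex_centralizer_singleton_of_finite_conj (hfc t ht)
  have : Finite (commutatorSet (closure (T : Set G))) :=
    finite_commutatorSet_of_finiteIndex_center
  -- Schur's theorem is the `Finite (commutator _)` instance for finitely many commutators.
  have hschur : Finite (commutator (closure (T : Set G))) := inferInstance
  refine ⟨hcenter, hschur, derivedSeries G 2, derivedSeries_normal G 2, ?_, le_rfl⟩
  have hG'' : ⁅closure (T : Set G), closure (T : Set G)⁆ = derivedSeries G 2 := by
    rw [hgen]
    rfl
  rw [← hG'', ← map_subtype_commutator]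
  exact Finite.of_equiv _
    ((commutator _).equivMapOfInjective _ (closure (T : Set G)).subtype_injective).toEquiv
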